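/- For every positive integer n, the sum over k from 1 to n of H_{n−k}/(k(k+1)) equals ((n−1)/(n+1))·H_{n+1} − (n−1)/(n+1)^2. -/

import Mathlib

/-- The `n`-th harmonic number `H_n = ∑_{k=1}^n 1/k`, with `H_0 = 0`. -/
def H (n : ℕ) : ℚ := ∑ k ∈ Finset.range n, 1 / ((k : ℚ) + 1)

/-- The generalized harmonic number of order 2, `H_n^{(2)} = ∑_{k=1}^n 1/k^2`, with `H_0^{(2)} = 0`. -/
def H2 (n : ℕ) : ℚ := ∑ k ∈ Finset.range n, 1 / ((k : ℚ) + 1) ^ 2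

/-!
Induction on `n`. Since `H_{n+1-k} - H_{n-k} = 1/(n+1-k)`, passing from `n` to `n+1` adds
`∑_{k=1}^n 1/(k(k+1)(n+1-k))`. Writing `1/(k(k+1)) = 1/k - 1/(k+1)` and `1/(ab) = (1/a + 1/b)/(a+b)`
turns this into harmonic sums, the reflection `k ↦ n+1-k` giving `∑_{k=1}^n 1/(n+1-k) = H_n`;
the closed form has the same increment.
-/

open Finset

theorem H_succ (n : ℕ) : H (n + 1) = H n + 1 / ((n : ℚ) + 1) := by
  simp only [H, sum_range_succ]

theorem H_eq_sum_Icc (n : ℕ) : H n = ∑ k ∈ Icc 1 n, (1 : ℚ) / k := by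
  induction n with
  | zero => simp [H]
  | succ n ih => rw [sum_Icc_succ_top (by omega), ← ih, H_succ]; push_cast; rfl

theorem sum_Icc_one_div_succ (n : ℕ) : ∑ k ∈ Icc 1 n, (1 : ℚ) / (k + 1) = H (n + 1) - 1 := by
  induction n with
  | zero => simp [H]
  | succ n ih => rw [sum_Icc_succ_top (by omega), ih, H_succ (n + 1)]; push_cast; ring

theorem sum_Icc_reflect {M : Type*} [AddCommMonoid M] (f : ℕ → M) (n : ℕ) :
    ∑ k ∈ Icc 1 n, f (n + 1 - k) = ∑ k ∈ Icc 1 n, f k := by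
  rw [← Ico_add_one_right_eq_Icc, sum_Ico_reflect f 1 (by omega : n + 1 ≤ n + 1 + 1)]
  congr 2; omega

theorem cast_add_one_sub {n k : ℕ} (hk : k ≤ n + 1) : ((n + 1 - k : ℕ) : ℚ) = n + 1 - k := by
  push_cast [Nat.cast_sub hk]; ring

theorem add_one_sub_cast_ne_zero {n k : ℕ} (hk : k ≤ n) : (n : ℚ) + 1 - k ≠ 0 := by
  rw [← cast_add_one_sub (by omega)]; exact_mod_cast (by omega : n + 1 - k ≠ 0)

theorem one_div_mul_of_add_eq {K : Type*} [Field K] {a b c : K} (ha : a ≠ 0) (hb : b ≠ 0)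
    (hc : c ≠ 0) (habc : a + b = c) : 1 / (a * b) = (1 / a + 1 / b) / c := by
  field_simp; rw [add_comm, habc]

theorem sum_Icc_one_div_reflect (n : ℕ) : ∑ k ∈ Icc 1 n, (1 : ℚ) / (n + 1 - k) = H n := by
  rw [H_eq_sum_Icc, ← sum_Icc_reflect (fun k : ℕ => (1 : ℚ) / k)]
  refine sum_congr rfl fun k hk => ?_
  rw [cast_add_one_sub ((mem_Icc.mp hk).2.trans n.le_succ)]

theorem sum_Icc_one_div_mul_reflect (n : ℕ) :
    ∑ k ∈ Icc 1 n, (1 : ℚ) / (k * (n + 1 - k)) = 2 / (n + 1) * H n := by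
  have hpf : ∀ k ∈ Icc 1 n, (1 : ℚ) / (k * (n + 1 - k)) = (1 / k + 1 / (n + 1 - k)) / (n + 1) := by
    intro k hk
    obtain ⟨hk1, hkn⟩ := mem_Icc.mp hk
    exact one_div_mul_of_add_eq (Nat.cast_ne_zero.mpr (by omega)) (add_one_sub_cast_ne_zero hkn)
      (by positivity) (by ring)
  rw [sum_congr rfl hpf, ← sum_div, sum_add_distrib, ← H_eq_sum_Icc, sum_Icc_one_div_reflect]
  ring

theorem sum_Icc_one_div_succ_mul_reflect (n : ℕ) :
    ∑ k ∈ Icc 1 n, (1 : ℚ) / ((k + 1) * (n + 1 - k)) = (H (n + 1) - 1 + H n) / (n + 2) := by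
  have hpf : ∀ k ∈ Icc 1 n,
      (1 : ℚ) / ((k + 1) * (n + 1 - k)) = (1 / (k + 1) + 1 / (n + 1 - k)) / (n + 2) := by
    intro k hk
    exact one_div_mul_of_add_eq (by positivity) (add_one_sub_cast_ne_zero (mem_Icc.mp hk).2)
      (by positivity) (by ring)
  rw [sum_congr rfl hpf, ← sum_div, sum_add_distrib, sum_Icc_one_div_succ, sum_Icc_one_div_reflect]

theorem sum_Icc_succ_H_sub_div (n : ℕ) (d : ℕ → ℚ) :
    ∑ k ∈ Icc 1 (n + 1), H (n + 1 - k) / d k =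
      ∑ k ∈ Icc 1 n, H (n - k) / d k + ∑ k ∈ Icc 1 n, 1 / (d k * (n + 1 - k)) := by
  have H_zero : H 0 = 0 := sum_range_zero _
  rw [sum_Icc_succ_top (by omega), Nat.sub_self, H_zero, zero_div, add_zero, ← sum_add_distrib]
  refine sum_congr rfl fun k hk => ?_
  have hkn : k ≤ n := (mem_Icc.mp hk).2
  rw [Nat.sub_add_comm hkn, H_succ, Nat.cast_sub hkn, mul_comm (d k), ← div_div]
  ring

theorem stmt_16_general (n : ℕ) :
    ∑ k ∈ Finset.Icc 1 n, H (n - k) / ((k : ℚ) * ((k : ℚ) + 1)) =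
      (((n : ℚ) - 1) / ((n : ℚ) + 1)) * H (n + 1) - ((n : ℚ) - 1) / ((n : ℚ) + 1) ^ 2 := by
  induction n with
  | zero => simp [H]
  | succ n ih =>
    have hsplit : ∀ k ∈ Icc 1 n, (1 : ℚ) / (k * (k + 1) * (n + 1 - k)) =
        1 / (k * (n + 1 - k)) - 1 / ((k + 1) * (n + 1 - k)) := by
      intro k hk
      have hk0 : (k : ℚ) ≠ 0 := Nat.cast_ne_zero.mpr (Nat.one_le_iff_ne_zero.mp (mem_Icc.mp hk).1)
      field_simp
      ring
    rw [sum_Icc_succ_H_sub_div, ih, sum_congr rfl hsplit, sum_sub_distrib,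
      sum_Icc_one_div_mul_reflect, sum_Icc_one_div_succ_mul_reflect, H_succ (n + 1), H_succ n]
    push_cast
    field_simp
    ring

theorem stmt_16 (n : ℕ) (hn : 0 < n) :
    ∑ k ∈ Finset.Icc 1 n, H (n - k) / ((k : ℚ) * ((k : ℚ) + 1)) =
      (((n : ℚ) - 1) / ((n : ℚ) + 1)) * H (n + 1) - ((n : ℚ) - 1) / ((n : ℚ) + 1) ^ 2 :=
  stmt_16_general n
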